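/- arXiv:2602.13965 — 5 statements merged into one kernel-verified Lean document; each statement's English description precedes it below -/
import Mathlib

section
/- Let g : ℝⁿ → ℝ be of class C^r on a neighbourhood U of a point x̄, and let Σ ⊆ ℝⁿ be a set such that the r-th Taylor polynomial of g at every point z ∈ Σ ∩ U is identically zero. Then there exist positive constants c and δ such that |g(x)| ≤ c · dist(x, Σ)^r for all x in the closed ball of radius δ around x̄. -/
/-!
At a point `y ∈ Σ` all derivatives of `g` of order `< r` vanish, so integrating the bound
`‖D^r g‖ ≤ K` back down `r` times with the mean value inequality gives
`|g x| ≤ K ‖x - y‖^r` on a convex neighbourhood of `x̄`. Points of `Σ` at distance `≥ δ`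
are handled by the trivial bound `|g x| ≤ B ≤ (B / δ^r) ‖x - y‖^r`, and taking the
infimum over `y ∈ Σ` gives the claim.
-/

open Filter Metric Set Topology

section TaylorVanishing

variable {E F : Type*} [NormedAddCommGroup E] [NormedSpace ℝ E]
  [NormedAddCommGroup F] [NormedSpace ℝ F]

theorem Convex.norm_le_mul_norm_sub_pow_succ {f : E → F} {s : Set E} {x y : E} {K : ℝ} {j : ℕ}
    (hs : Convex ℝ s) (hf : ∀ z ∈ s, DifferentiableAt ℝ f z) (hK : 0 ≤ K)
    (hf' : ∀ z ∈ s, ‖fderiv ℝ f z‖ ≤ K * ‖z - y‖ ^ j)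
    (hy : y ∈ s) (hfy : f y = 0) (hx : x ∈ s) :
    ‖f x‖ ≤ K * ‖x - y‖ ^ (j + 1) := by
  -- on `s ∩ closedBall y ‖x - y‖` the derivative is bounded by `K ‖x - y‖ ^ j`
  have hmvt := (hs.inter (convex_closedBall y ‖x - y‖)).norm_image_sub_le_of_norm_fderiv_le
    (C := K * ‖x - y‖ ^ j) (fun z hz => hf z hz.1)
    (fun z hz => (hf' z hz.1).trans <| by
      gcongr
      simpa [dist_eq_norm] using hz.2)
    (⟨hy, mem_closedBall_self (norm_nonneg _)⟩ : y ∈ s ∩ closedBall y ‖x - y‖)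
    ⟨hx, by simp [dist_eq_norm]⟩
  rw [hfy, sub_zero] at hmvt
  rwa [pow_succ, ← mul_assoc]

theorem Convex.norm_le_mul_norm_sub_pow_of_iteratedFDeriv_eq_zero {f : E → F} {s : Set E}
    {x y : E} {K : ℝ} {r : ℕ} (hs : Convex ℝ s) (hf : ∀ z ∈ s, ContDiffAt ℝ r f z)
    (hK : ∀ z ∈ s, ‖iteratedFDeriv ℝ r f z‖ ≤ K) (hy : y ∈ s)
    (hfy : ∀ j < r, iteratedFDeriv ℝ j f y = 0) (hx : x ∈ s) :
    ‖f x‖ ≤ K * ‖x - y‖ ^ r := by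
  have hK0 : 0 ≤ K := (norm_nonneg _).trans (hK y hy)
  have descend : ∀ k ≤ r, ∀ z ∈ s, ‖iteratedFDeriv ℝ (r - k) f z‖ ≤ K * ‖z - y‖ ^ k := by
    intro k
    induction k with
    | zero => simpa using hK
    | succ k ih =>
      intro hk z hz
      have hm : r - k = r - (k + 1) + 1 := by omega
      refine hs.norm_le_mul_norm_sub_pow_succ
        (fun w hw => (hf w hw).differentiableAt_iteratedFDeriv (mod_cast (by omega)))
        hK0 (fun w hw => ?_) hy (hfy _ (by omega)) hz
      rw [norm_fderiv_iteratedFDeriv, ← hm]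
      exact ih (by omega) w hw
  have h := descend r le_rfl x hx
  rwa [Nat.sub_self, norm_iteratedFDeriv_zero] at h

end TaylorVanishing

theorem Metric.le_mul_infDist_pow {α : Type*} [PseudoMetricSpace α] {S : Set α} {x : α}
    {a c : ℝ} {r : ℕ} (hS : S.Nonempty) (hc : 0 ≤ c) (h : ∀ y ∈ S, a ≤ c * dist x y ^ r) :
    a ≤ c * infDist x S ^ r := by
  have hcont : Continuous fun t : ℝ => c * t ^ r := by fun_prop
  have htendsto : Tendsto (fun t : ℝ => c * t ^ r) (𝓝[>] (infDist x S)) (𝓝 _) :=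
    hcont.continuousAt.mono_left nhdsWithin_le_nhds
  refine ge_of_tendsto htendsto ?_
  filter_upwards [self_mem_nhdsWithin] with t ht
  obtain ⟨y, hyS, hy⟩ := (infDist_lt_iff hS).1 ht
  exact (h y hyS).trans (by gcongr)

/-- Taylor-vanishing lemma: if all derivatives of `g` of orders `0` through `r` vanish on
`S ∩ U`, then `|g x| ≤ c · dist(x, S)^r` near `xbar`. -/
theorem stmt_0 {n : ℕ} (r : ℕ) (g : EuclideanSpace ℝ (Fin n) → ℝ)
    (S U : Set (EuclideanSpace ℝ (Fin n))) (hS : S.Nonempty)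
    (hU : IsOpen U) (xbar : EuclideanSpace ℝ (Fin n)) (hx : xbar ∈ U)
    (hg : ContDiffOn ℝ r g U)
    (hT : ∀ z ∈ S ∩ U, ∀ j ≤ r, iteratedFDeriv ℝ j g z = 0) :
    ∃ c > (0 : ℝ), ∃ δ > (0 : ℝ), ∀ x ∈ Metric.closedBall xbar δ,
      |g x| ≤ c * Metric.infDist x S ^ r := by
  obtain ⟨ε, hε, hball⟩ := nhds_basis_closedBall.mem_iff.1 (hU.mem_nhds hx)
  obtain ⟨δ, hδ, hCU⟩ : ∃ δ > 0, closedBall xbar (2 * δ) ⊆ U :=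
    ⟨ε / 2, half_pos hε, by rwa [mul_div_cancel₀ ε two_ne_zero]⟩
  set C := closedBall xbar (2 * δ)
  obtain ⟨B, hB⟩ := (isCompact_closedBall xbar (2 * δ)).exists_bound_of_continuousOn
    (hg.continuousOn.mono hCU)
  obtain ⟨K, hK⟩ := (isCompact_closedBall xbar (2 * δ)).exists_bound_of_continuousOn
    ((ContinuousOn.continuousOn_iteratedFDeriv hg hU le_rfl).mono hCU)
  have hxbar : xbar ∈ C := mem_closedBall_self (by positivity)
  have hB0 : 0 ≤ B := (norm_nonneg _).trans (hB xbar hxbar)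
  have hK0 : 0 ≤ K := (norm_nonneg _).trans (hK xbar hxbar)
  refine ⟨K + B / δ ^ r + 1, by positivity, δ, hδ, fun x hx =>
    le_mul_infDist_pow hS (by positivity) fun y hy => ?_⟩
  have hxC : x ∈ C := closedBall_subset_closedBall (by linarith) hx
  rcases lt_or_ge (dist x y) δ with hnear | hfar
  · have hyC : y ∈ C := by
      rw [mem_closedBall] at hx ⊢
      linarith [dist_triangle_left y xbar x]
    have htaylor := Convex.norm_le_mul_norm_sub_pow_of_iteratedFDeriv_eq_zero
      (convex_closedBall xbar (2 * δ)) (fun z hz => hg.contDiffAt (hU.mem_nhds (hCU hz)))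
      hK hyC (fun j hj => hT y ⟨hy, hCU hyC⟩ j hj.le) hxC
    calc |g x| ≤ K * dist x y ^ r := by simpa [← dist_eq_norm] using htaylor
      _ ≤ (K + B / δ ^ r + 1) * dist x y ^ r := by
        gcongr
        linarith [div_nonneg hB0 (pow_nonneg hδ.le r)]
  · calc |g x| ≤ B := by simpa using hB x hxC
      _ = B / δ ^ r * δ ^ r := by field_simp
      _ ≤ B / δ ^ r * dist x y ^ r := by gcongr
      _ ≤ (K + B / δ ^ r + 1) * dist x y ^ r := by gcongr; linarith
end

section
/- Let f : ℝⁿ → ℝ be C^1 on a neighbourhood V of x̄, let x̄ be a local minimum of f, and let Σ ⊆ ℝⁿ be a set containing all critical points of f in V. Suppose there exist positive constants c and δ such that ‖∇f(x)‖ ≥ c · dist(x, Σ)^{r−1} for all x with ‖x − x̄‖ ≤ δ. Then there exist positive constants c' and δ' such that f(x) − f(x̄) ≥ c' · dist(x, Σ)^r for all x with ‖x − x̄‖ ≤ δ'. -/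
/-!
Instead of Ekeland's principle, which is not needed in finite dimension, penalize `f` by
`κ · dist(·, x)` and minimize over a compact ball around `x̄`. If the growth inequality failed at
`x` with `d = dist(x, Σ)`, the choice `κ ≈ d^{r-1}` would place the minimizer `y` within `d / 2`
of `x`, hence in the interior of the ball and at distance more than `d / 2` from `Σ`; at an
interior minimizer `‖∇f(y)‖ ≤ κ`, which is smaller than the gradient inequality allows.
-/

open Filter Metric Set Topology

section Penalization

variable {E : Type*} [NormedAddCommGroup E] [NormedSpace ℝ E]

theorem HasFDerivAt.norm_le_of_isLocalMin_add_mul_norm {f : E → ℝ} {f' : E →L[ℝ] ℝ} {x₀ : E}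
    (hf : HasFDerivAt f f' x₀) {C : ℝ} (hC : 0 ≤ C)
    (hmin : IsLocalMin (fun x => f x + C * ‖x - x₀‖) x₀) : ‖f'‖ ≤ C := by
  refine le_of_forall_pos_le_add fun ε ε0 => f'.opNorm_le_of_nhds_zero (add_nonneg hC ε0.le) ?_
  have hmin' : ∀ᶠ y in 𝓝 (0 : E), f x₀ ≤ f (x₀ + y) + C * ‖y‖ := by
    rw [IsLocalMin, IsMinFilter, ← map_add_left_nhds_zero x₀, eventually_map] at hmin
    filter_upwards [hmin] with y hy
    simpa using hy
  have hneg : ∀ᶠ y in 𝓝 (0 : E), -f' y ≤ (C + ε) * ‖y‖ := by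
    have hlin := Asymptotics.isLittleO_iff.1 (hasFDerivAt_iff_isLittleO_nhds_zero.1 hf) ε0
    filter_upwards [hlin, hmin'] with y hy hyC
    rw [Real.norm_eq_abs, abs_le] at hy
    linarith [hy.1]
  have hneg' : ∀ᶠ y in 𝓝 (0 : E), -f' (-y) ≤ (C + ε) * ‖-y‖ :=
    (neg_zero (G := E) ▸ (continuous_neg.tendsto (0 : E))).eventually hneg
  filter_upwards [hneg, hneg'] with y hy hy'
  rw [map_neg, neg_neg, norm_neg] at hy'
  exact abs_le.2 ⟨by linarith, hy'⟩

/-- `y` minimizes `f + κ · dist(·, x)` over the ball; `hfx` keeps it off the boundary sphere. -/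
theorem exists_sub_ge_mul_dist_and_norm_fderiv_le [ProperSpace E] {f : E → ℝ} {a x : E}
    {ρ κ m : ℝ} (hκ : 0 < κ) (hcont : ContinuousOn f (closedBall a ρ))
    (hdiff : ∀ y ∈ ball a ρ, DifferentiableAt ℝ f y) (hm : ∀ y ∈ closedBall a ρ, m ≤ f y)
    (hx : x ∈ closedBall a ρ) (hfx : f x - m < κ * (ρ - dist x a)) :
    ∃ y ∈ ball a ρ, κ * dist y x ≤ f x - f y ∧ ‖fderiv ℝ f y‖ ≤ κ := by
  obtain ⟨y, hyB, hymin⟩ := (isCompact_closedBall a ρ).exists_isMinOn ⟨x, hx⟩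
    (hcont.add (continuous_const.mul (continuous_id.dist continuous_const)).continuousOn)
  have hgain : κ * dist y x ≤ f x - f y := by
    have : f y + κ * dist y x ≤ f x + κ * dist x x := hymin hx
    rw [dist_self, mul_zero, add_zero] at this
    linarith
  have hy : y ∈ ball a ρ := by
    have := hm y hyB
    rw [mem_ball]
    nlinarith [dist_triangle y x a]
  refine ⟨y, hy, hgain, (hdiff y hy).hasFDerivAt.norm_le_of_isLocalMin_add_mul_norm hκ.le ?_⟩
  filter_upwards [isOpen_ball.mem_nhds hy] with z hz
  have hzy : f y + κ * dist y x ≤ f z + κ * dist z x := hymin (ball_subset_closedBall hz)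
  have htri : dist z x ≤ dist z y + dist y x := dist_triangle z y x
  rw [sub_self, norm_zero, mul_zero, add_zero, ← dist_eq_norm]
  nlinarith

end Penalization

theorem norm_gradient {F : Type*} [NormedAddCommGroup F] [InnerProductSpace ℝ F] [CompleteSpace F]
    (f : F → ℝ) (x : F) : ‖gradient f x‖ = ‖fderiv ℝ f x‖ :=
  (InnerProductSpace.toDual ℝ F).symm.norm_map _

theorem div_two_pow_succ_mul_pow {r : ℕ} (hr : 1 ≤ r) (c d : ℝ) :
    c / 2 ^ (r + 1) * d ^ r = c / 2 * (d / 2) ^ (r - 1) * (d / 2) := by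
  obtain ⟨k, rfl⟩ := Nat.exists_eq_add_of_le' hr
  rw [Nat.add_sub_cancel, div_pow, pow_succ, pow_succ]
  field_simp
  ring

theorem le_sub_of_mul_infDist_pow_le_norm_fderiv {E : Type*} [NormedAddCommGroup E]
    [NormedSpace ℝ E] [ProperSpace E] {f : E → ℝ} {a : E} {S : Set E} {r : ℕ} (hr : 1 ≤ r)
    {c ρ : ℝ} (hc : 0 < c) (ha : a ∈ S) (hcont : ContinuousOn f (closedBall a ρ))
    (hdiff : ∀ x ∈ ball a ρ, DifferentiableAt ℝ f x) (hmin : ∀ x ∈ closedBall a ρ, f a ≤ f x)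
    (hgrad : ∀ x ∈ ball a ρ, c * infDist x S ^ (r - 1) ≤ ‖fderiv ℝ f x‖) :
    ∀ x ∈ closedBall a (ρ / 2), c / 2 ^ (r + 1) * infDist x S ^ r ≤ f x - f a := by
  intro x hx
  rw [mem_closedBall] at hx
  set d := infDist x S
  have hxB : x ∈ closedBall a ρ := mem_closedBall.2 (by linarith [dist_nonneg (x := x) (y := a)])
  have hfx : f a ≤ f x := hmin x hxB
  have hda : d ≤ dist x a := infDist_le_dist_of_mem ha
  have hd0 : 0 ≤ d := infDist_nonneg
  rcases hd0.eq_or_lt with hd | hd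
  · rw [← hd, zero_pow (by omega), mul_zero]
    linarith
  by_contra! hlt
  rw [div_two_pow_succ_mul_pow hr] at hlt
  set κ := c / 2 * (d / 2) ^ (r - 1) with hκ_def
  have hκ : 0 < κ := by positivity
  obtain ⟨y, hy, hgain, hDf⟩ := exists_sub_ge_mul_dist_and_norm_fderiv_le hκ hcont hdiff hmin hxB
    (hlt.trans_le (by gcongr; linarith))
  have hyx : dist y x < d / 2 := by
    refine lt_of_mul_lt_mul_left ?_ hκ.le
    linarith [hmin y (ball_subset_closedBall hy)]
  have hyS : d / 2 < infDist y S := by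
    linarith [infDist_le_infDist_add_dist (x := x) (y := y) (s := S), dist_comm x y]
  have : c * (d / 2) ^ (r - 1) ≤ κ := calc
    c * (d / 2) ^ (r - 1) ≤ c * infDist y S ^ (r - 1) := by gcongr
    _ ≤ ‖fderiv ℝ f y‖ := hgrad y hy
    _ ≤ κ := hDf
  have hpos : 0 < c * (d / 2) ^ (r - 1) := by positivity
  linarith

/-- (iii) ⇒ (ii) of the main theorem: a Łojasiewicz gradient inequality relative to a set `S`
containing the critical points implies the growth condition at a local minimum. -/
theorem stmt_3 {n : ℕ} (r : ℕ) (hr : 1 ≤ r) (f : EuclideanSpace ℝ (Fin n) → ℝ)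
    (xbar : EuclideanSpace ℝ (Fin n)) (V S : Set (EuclideanSpace ℝ (Fin n)))
    (hV : IsOpen V) (hx : xbar ∈ V) (hf : ContDiffOn ℝ 1 f V)
    (hmin : IsLocalMin f xbar)
    (hcrit : {x ∈ V | gradient f x = 0} ⊆ S)
    (c δ : ℝ) (hc : 0 < c) (hδ : 0 < δ)
    (hgrad : ∀ x ∈ Metric.closedBall xbar δ,
      c * Metric.infDist x S ^ (r - 1) ≤ ‖gradient f x‖) :
    ∃ c' > (0 : ℝ), ∃ δ' > (0 : ℝ), ∀ x ∈ Metric.closedBall xbar δ',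
      c' * Metric.infDist x S ^ r ≤ f x - f xbar := by
  have hxS : xbar ∈ S := hcrit ⟨hx, by rw [gradient, hmin.fderiv_eq_zero, map_zero]⟩
  obtain ⟨ε, hε, hεsub⟩ := nhds_basis_closedBall.mem_iff.1 (inter_mem (hV.mem_nhds hx) hmin)
  set ρ := min ε δ
  have hρB : closedBall xbar ρ ⊆ V ∩ {x | f xbar ≤ f x} :=
    (closedBall_subset_closedBall (min_le_left ε δ)).trans hεsub
  have hρδ : ball xbar ρ ⊆ closedBall xbar δ :=
    ball_subset_closedBall.trans (closedBall_subset_closedBall (min_le_right ε δ))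
  refine ⟨c / 2 ^ (r + 1), by positivity, ρ / 2, by positivity,
    le_sub_of_mul_infDist_pow_le_norm_fderiv hr hc hxS
      (hf.continuousOn.mono fun x hx => (hρB hx).1) (fun x hx => ?_) (fun x hx => (hρB hx).2)
      (fun x hx => ?_)⟩
  · exact (hf.differentiableOn one_ne_zero x (hρB (ball_subset_closedBall hx)).1).differentiableAt
      (hV.mem_nhds (hρB (ball_subset_closedBall hx)).1)
  · rw [← norm_gradient]
    exact hgrad x (hρδ hx)
end

section
/- Let f : ℝⁿ → ℝ be C^1 near x̄ and suppose there exist c > 0, δ > 0 with ‖∇f(x)‖ ≥ c·‖x − x̄‖^{r−1} for all ‖x − x̄‖ ≤ δ, where x̄ is a local minimum of f. Then there exist c' > 0, δ' > 0 such that f(x) − f(x̄) ≥ c'·‖x − x̄‖^r for all ‖x − x̄‖ ≤ δ'. -/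
/-!
Let `x` be close to `x̄`, put `λ = ‖x - x̄‖ / 2` and take any `ε > f x - f x̄`. As `x̄` is a local
minimiser, `x` is an `ε`-minimiser of `f` on the closed ball of radius `λ` about `x`. Minimising
`z ↦ f z + (ε / λ) ‖z - x‖` over that compact ball (in place of Ekeland's variational principle)
gives a point `y` with `‖y - x‖ < λ` at which `‖∇f y‖ ≤ ε / λ`. As `‖y - x̄‖ ≥ λ`, the gradient
inequality yields `c λ ^ (r - 1) ≤ ε / λ`, hence `f x - f x̄ ≥ c λ ^ r`.
-/

open Filter Metric Set Topology

theorem exists_mem_ball_eventually_le_add_mul_dist {X : Type*} [PseudoMetricSpace X]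
    [ProperSpace X] {f : X → ℝ} {x : X} {ρ ε : ℝ} (hρ : 0 < ρ)
    (hf : ContinuousOn f (closedBall x ρ)) (hε : ∀ z ∈ closedBall x ρ, f x - ε < f z) :
    ∃ y ∈ ball x ρ, ∀ᶠ z in 𝓝 y, f y ≤ f z + ε / ρ * dist z y := by
  set κ := ε / ρ
  have hκ : 0 < κ := div_pos (by linarith [hε x (mem_closedBall_self hρ.le)]) hρ
  obtain ⟨y, hyB, hymin⟩ := (isCompact_closedBall x ρ).exists_isMinOn
    ⟨x, mem_closedBall_self hρ.le⟩ (hf.add (continuous_const.mul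
      (continuous_id.dist continuous_const)).continuousOn :
        ContinuousOn (fun z => f z + κ * dist z x) _)
  have hyx : f y + κ * dist y x ≤ f x := by simpa using hymin (mem_closedBall_self hρ.le)
  have hy : y ∈ ball x ρ := by
    have : κ * dist y x < κ * ρ := by
      rw [div_mul_cancel₀ ε hρ.ne']
      linarith [hε y hyB]
    exact lt_of_mul_lt_mul_left this hκ.le
  refine ⟨y, hy, ?_⟩
  filter_upwards [isOpen_ball.mem_nhds hy] with z hz
  have hmin : f y + κ * dist y x ≤ f z + κ * dist z x := hymin (ball_subset_closedBall hz)
  have htri : κ * dist z x ≤ κ * (dist z y + dist y x) :=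
    mul_le_mul_of_nonneg_left (dist_triangle z y x) hκ.le
  linarith

variable {E : Type*} [NormedAddCommGroup E] [NormedSpace ℝ E]

theorem HasFDerivAt.opNorm_le_of_eventually_le_add_mul_norm {f : E → ℝ} {f' : E →L[ℝ] ℝ}
    {y : E} {κ : ℝ} (hf : HasFDerivAt f f' y) (hκ : 0 ≤ κ)
    (hloc : ∀ᶠ z in 𝓝 y, f y ≤ f z + κ * ‖z - y‖) : ‖f'‖ ≤ κ := by
  have neg_le : ∀ v, -(κ * ‖v‖) ≤ f' v := by
    intro v
    have hline : HasDerivAt (fun t : ℝ => f (y + t • v)) (f' v) 0 := by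
      have := ((hasDerivAt_id (0 : ℝ)).smul_const v).const_add y
      simp only [id, one_smul] at this
      exact hf.comp_hasDerivAt_of_eq 0 this (by simp)
    have hslope : Tendsto (slope (fun t : ℝ => f (y + t • v)) 0) (𝓝[>] 0) (𝓝 (f' v)) :=
      (hasDerivAt_iff_tendsto_slope.1 hline).mono_left (nhdsWithin_mono 0 fun t ht => ht.ne')
    have hray : Tendsto (fun t : ℝ => y + t • v) (𝓝[>] 0) (𝓝 y) :=
      tendsto_nhdsWithin_of_tendsto_nhds (by
        simpa using ((continuous_id.smul continuous_const).const_add y).tendsto (0 : ℝ))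
    refine ge_of_tendsto hslope ?_
    filter_upwards [hray.eventually hloc, self_mem_nhdsWithin] with t ht (htpos : 0 < t)
    rw [slope_def_field, sub_zero, zero_smul, add_zero, le_div_iff₀ htpos]
    simp only [add_sub_cancel_left, norm_smul, Real.norm_of_nonneg htpos.le] at ht
    linarith
  refine f'.opNorm_le_bound hκ fun v => abs_le.2 ⟨neg_le v, ?_⟩
  simpa [norm_neg] using neg_le (-v)

theorem IsMinOn.half_norm_mul_le_sub_of_le_norm_fderiv [ProperSpace E] {f : E → ℝ}
    {φ : ℝ → ℝ} {xbar x : E} {ρ : ℝ} (hmin : IsMinOn f (ball xbar ρ) xbar)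
    (hd : DifferentiableOn ℝ f (ball xbar ρ)) (hφ : MonotoneOn φ (Ici 0))
    (hgrad : ∀ y ∈ ball xbar ρ, φ ‖y - xbar‖ ≤ ‖fderiv ℝ f y‖) (hx : ‖x - xbar‖ ≤ ρ / 2) :
    ‖x - xbar‖ / 2 * φ (‖x - xbar‖ / 2) ≤ f x - f xbar := by
  set s := ‖x - xbar‖ / 2 with hs_def
  rcases (norm_nonneg (x - xbar)).eq_or_lt with hN | hN
  · rw [eq_comm, norm_eq_zero, sub_eq_zero] at hN
    simp [hN, s]
  have hs : 0 < s := by positivity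
  have hfx : f xbar ≤ f x := hmin (mem_ball_iff_norm.2 (by linarith))
  have hsub : closedBall x s ⊆ ball xbar ρ :=
    closedBall_subset_ball' (by rw [dist_eq_norm]; linarith)
  refine le_of_forall_gt_imp_ge_of_dense fun ε hε => ?_
  obtain ⟨y, hy, hloc⟩ := exists_mem_ball_eventually_le_add_mul_dist (ε := ε) hs
    (hd.continuousOn.mono hsub) fun z hz => by
      have : f xbar ≤ f z := hmin (hsub hz)
      linarith
  have hyρ : y ∈ ball xbar ρ := hsub (ball_subset_closedBall hy)
  have hfd : ‖fderiv ℝ f y‖ ≤ ε / s :=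
    (hd.differentiableAt (isOpen_ball.mem_nhds hyρ)).hasFDerivAt
      |>.opNorm_le_of_eventually_le_add_mul_norm (div_nonneg (by linarith) hs.le)
        (by simpa only [dist_eq_norm] using hloc)
  have hys : s ≤ ‖y - xbar‖ := by
    have := norm_sub_le_norm_sub_add_norm_sub x y xbar
    rw [mem_ball_iff_norm'] at hy
    linarith
  have := (hφ hs.le (norm_nonneg _) hys).trans ((hgrad y hyρ).trans hfd)
  rwa [le_div_iff₀ hs, mul_comm] at this

/-- Special case `S = {xbar}`: the gradient inequality `‖∇f(x)‖ ≥ c‖x - xbar‖^(r-1)` at a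
local minimum implies the growth condition `f(x) - f(xbar) ≥ c'‖x - xbar‖^r`. -/
theorem stmt_7 {n : ℕ} (r : ℕ) (hr : 1 ≤ r) (f : EuclideanSpace ℝ (Fin n) → ℝ)
    (xbar : EuclideanSpace ℝ (Fin n)) (U : Set (EuclideanSpace ℝ (Fin n)))
    (hU : IsOpen U) (hx : xbar ∈ U) (hf : ContDiffOn ℝ 1 f U)
    (hmin : IsLocalMin f xbar)
    (c δ : ℝ) (hc : 0 < c) (hδ : 0 < δ)
    (hgrad : ∀ x, ‖x - xbar‖ ≤ δ → c * ‖x - xbar‖ ^ (r - 1) ≤ ‖gradient f x‖) :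
    ∃ c' > (0 : ℝ), ∃ δ' > (0 : ℝ), ∀ x, ‖x - xbar‖ ≤ δ' →
      c' * ‖x - xbar‖ ^ r ≤ f x - f xbar := by
  obtain ⟨m, rfl⟩ : ∃ m, r = m + 1 := ⟨r - 1, by omega⟩
  obtain ⟨ρ, hρ, hball⟩ := eventually_nhds_iff_ball.1
    ((hmin.and (hU.mem_nhds hx)).and (ball_mem_nhds xbar hδ))
  have hd : DifferentiableOn ℝ f (ball xbar ρ) := fun z hz =>
    (hf.contDiffAt (hU.mem_nhds (hball z hz).1.2)).differentiableAt one_ne_zero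
      |>.differentiableWithinAt
  have hfderiv : ∀ y ∈ ball xbar ρ, c * ‖y - xbar‖ ^ m ≤ ‖fderiv ℝ f y‖ := fun y hy => by
    simpa [gradient] using hgrad y (mem_ball_iff_norm.1 (hball y hy).2).le
  have hφ : MonotoneOn (fun t : ℝ => c * t ^ m) (Ici 0) := fun a ha b _ hab =>
    mul_le_mul_of_nonneg_left (pow_le_pow_left₀ ha hab m) hc.le
  have hminρ : IsMinOn f (ball xbar ρ) xbar := fun z hz => (hball z hz).1.1
  refine ⟨c / 2 ^ (m + 1), by positivity, ρ / 2, by positivity, fun x hx => ?_⟩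
  calc c / 2 ^ (m + 1) * ‖x - xbar‖ ^ (m + 1)
      = ‖x - xbar‖ / 2 * (c * (‖x - xbar‖ / 2) ^ m) := by rw [div_pow]; field_simp; ring
    _ ≤ f x - f xbar := hminρ.half_norm_mul_le_sub_of_le_norm_fderiv hd hφ hfderiv hx
end

section
/- Let f : ℝⁿ → ℝ be C^1 on an open set U, let x̄ ∈ U be a local minimum of f over the closed ball B_δ(x̄) ⊆ U, and suppose x_k → x̄ is a sequence with f(x_k) − f(x̄) < ε_k for positive numbers ε_k. Then for any λ_k > 0 there exist points x'_k ∈ B_δ(x̄) with ‖x'_k − x_k‖ ≤ λ_k, f(x̄) ≤ f(x'_k) ≤ f(x_k), and ‖∇f(x'_k)‖ ≤ ε_k/λ_k whenever x'_k lies in the interior of B_δ(x̄). -/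
/-!
Minimize `y ↦ f y + (ε_k / λ_k) ‖y - x_k‖` over the compact ball. Comparing the minimizer `x'_k`
with `x_k` gives `f (x'_k) ≤ f (x_k)` and `(ε_k / λ_k) ‖x'_k - x_k‖ ≤ f (x_k) - f (x̄) < ε_k`. At an
interior minimizer, `f` decreases by at most `(ε_k / λ_k) ‖z - x'_k‖` near `x'_k`, so every
directional derivative of `f` there is at least `-(ε_k / λ_k)` times the length of the direction.
-/

open Filter Metric Set Topology

section NormedSpace

variable {E : Type*} [NormedAddCommGroup E] [NormedSpace ℝ E] {f : E → ℝ} {L : E →L[ℝ] ℝ}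
  {y : E} {C : ℝ}

theorem HasFDerivAt.neg_mul_norm_le_apply_of_eventually_le (hf : HasFDerivAt f L y)
    (h : ∀ᶠ z in 𝓝 y, f y - C * ‖z - y‖ ≤ f z) (v : E) : -(C * ‖v‖) ≤ L v := by
  have hline : Tendsto (fun t : ℝ ↦ y + t • v) (𝓝 0) (𝓝 y) := by
    have hcont : Continuous fun t : ℝ ↦ y + t • v := by fun_prop
    simpa using hcont.tendsto 0
  have hslope : ∀ᶠ t in 𝓝[>] (0 : ℝ), -(C * ‖v‖) ≤ t⁻¹ • (f (y + t • v) - f y) := by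
    filter_upwards [nhdsWithin_le_nhds (hline.eventually h), self_mem_nhdsWithin]
      with t ht (htpos : 0 < t)
    rw [add_sub_cancel_left, norm_smul, Real.norm_of_nonneg htpos.le] at ht
    rw [smul_eq_mul, le_inv_mul_iff₀ htpos]
    linarith
  exact ge_of_tendsto (hf.hasLineDerivAt v).tendsto_slope_zero_right hslope

theorem HasFDerivAt.norm_le_of_eventually_le (hf : HasFDerivAt f L y) (hC : 0 ≤ C)
    (h : ∀ᶠ z in 𝓝 y, f y - C * ‖z - y‖ ≤ f z) : ‖L‖ ≤ C := by
  refine L.opNorm_le_bound hC fun v ↦ abs_le.mpr ⟨?_, ?_⟩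
  · exact hf.neg_mul_norm_le_apply_of_eventually_le h v
  · simpa using hf.neg_mul_norm_le_apply_of_eventually_le h (-v)

theorem IsLocalMin.norm_fderiv_le_of_add_mul_norm_sub {x₀ : E} (hf : DifferentiableAt ℝ f y)
    (hC : 0 ≤ C) (hmin : IsLocalMin (fun z ↦ f z + C * ‖z - x₀‖) y) : ‖fderiv ℝ f y‖ ≤ C := by
  refine hf.hasFDerivAt.norm_le_of_eventually_le hC ?_
  filter_upwards [hmin] with z hz
  have htriangle : C * ‖z - x₀‖ ≤ C * (‖z - y‖ + ‖y - x₀‖) :=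
    mul_le_mul_of_nonneg_left (norm_sub_le_norm_sub_add_norm_sub z y x₀) hC
  linarith

end NormedSpace

theorem IsLocalMin.norm_gradient_le_of_add_mul_norm_sub {F : Type*} [NormedAddCommGroup F]
    [InnerProductSpace ℝ F] [CompleteSpace F] {f : F → ℝ} {x₀ y : F} {C : ℝ}
    (hf : DifferentiableAt ℝ f y) (hC : 0 ≤ C)
    (hmin : IsLocalMin (fun z ↦ f z + C * ‖z - x₀‖) y) : ‖gradient f y‖ ≤ C := by
  rw [gradient, LinearIsometryEquiv.norm_map]
  exact hmin.norm_fderiv_le_of_add_mul_norm_sub hf hC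

theorem stmt_16_general {n : ℕ} (f : EuclideanSpace ℝ (Fin n) → ℝ)
    (U : Set (EuclideanSpace ℝ (Fin n)))
    (xbar : EuclideanSpace ℝ (Fin n)) (δ : ℝ)
    (hball : Metric.closedBall xbar δ ⊆ U) (hf : ContDiffOn ℝ 1 f U)
    (hmin : ∀ x ∈ Metric.closedBall xbar δ, f xbar ≤ f x)
    (x : ℕ → EuclideanSpace ℝ (Fin n)) (ε : ℕ → ℝ)
    (hx : ∀ k, x k ∈ Metric.closedBall xbar δ)
    (hfx : ∀ k, f (x k) - f xbar < ε k) :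
    ∀ lam : ℕ → ℝ, (∀ k, 0 < lam k) →
      ∃ x' : ℕ → EuclideanSpace ℝ (Fin n), ∀ k,
        x' k ∈ Metric.closedBall xbar δ ∧
        ‖x' k - x k‖ ≤ lam k ∧
        f xbar ≤ f (x' k) ∧ f (x' k) ≤ f (x k) ∧
        (x' k ∈ Metric.ball xbar δ → ‖gradient f (x' k)‖ ≤ ε k / lam k) := by
  intro lam hlam
  suffices ∀ k, ∃ y ∈ closedBall xbar δ, ‖y - x k‖ ≤ lam k ∧ f xbar ≤ f y ∧ f y ≤ f (x k) ∧
      (y ∈ ball xbar δ → ‖gradient f y‖ ≤ ε k / lam k) by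
    choose x' hx' using this
    exact ⟨x', hx'⟩
  intro k
  have hc : 0 < ε k / lam k := div_pos (by linarith [hfx k, hmin _ (hx k)]) (hlam k)
  have hcont : ContinuousOn (fun z ↦ f z + ε k / lam k * ‖z - x k‖) (closedBall xbar δ) :=
    (hf.continuousOn.mono hball).add (by fun_prop)
  obtain ⟨y, hy, hymin⟩ := (isCompact_closedBall xbar δ).exists_isMinOn ⟨x k, hx k⟩ hcont
  have hyxk : f y + ε k / lam k * ‖y - x k‖ ≤ f (x k) := by simpa using hymin (hx k)
  have hdist : ε k / lam k * ‖y - x k‖ < ε k / lam k * lam k := by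
    rw [div_mul_cancel₀ _ (hlam k).ne']
    linarith [hfx k, hmin y hy]
  refine ⟨y, hy, (lt_of_mul_lt_mul_left hdist hc.le).le, hmin y hy, ?_, fun hyint ↦ ?_⟩
  · linarith [mul_nonneg hc.le (norm_nonneg (y - x k))]
  have hU : U ∈ 𝓝 y :=
    mem_of_superset (isOpen_ball.mem_nhds hyint) (ball_subset_closedBall.trans hball)
  exact (hymin.isLocalMin (closedBall_mem_nhds_of_mem hyint)).norm_gradient_le_of_add_mul_norm_sub
    ((hf.contDiffAt hU).differentiableAt one_ne_zero) hc.le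

/-- Ekeland-type lemma: if `xbar` minimizes the `C¹` function `f` over the closed ball
`B_δ(xbar)` and `f(x_k) - f(xbar) < ε_k`, then for any `λ_k > 0` there are points `x'_k` in
the ball with `‖x'_k - x_k‖ ≤ λ_k`, `f(xbar) ≤ f(x'_k) ≤ f(x_k)`, and
`‖∇f(x'_k)‖ ≤ ε_k/λ_k` whenever `x'_k` is interior. -/
theorem stmt_16 {n : ℕ} (f : EuclideanSpace ℝ (Fin n) → ℝ)
    (U : Set (EuclideanSpace ℝ (Fin n))) (hU : IsOpen U)
    (xbar : EuclideanSpace ℝ (Fin n)) (δ : ℝ) (hδ : 0 < δ)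
    (hball : Metric.closedBall xbar δ ⊆ U) (hf : ContDiffOn ℝ 1 f U)
    (hmin : ∀ x ∈ Metric.closedBall xbar δ, f xbar ≤ f x)
    (x : ℕ → EuclideanSpace ℝ (Fin n)) (ε : ℕ → ℝ)
    (hx : ∀ k, x k ∈ Metric.closedBall xbar δ)
    (hxlim : Filter.Tendsto x atTop (𝓝 xbar))
    (hε : ∀ k, 0 < ε k) (hfx : ∀ k, f (x k) - f xbar < ε k) :
    ∀ lam : ℕ → ℝ, (∀ k, 0 < lam k) →
      ∃ x' : ℕ → EuclideanSpace ℝ (Fin n), ∀ k,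
        x' k ∈ Metric.closedBall xbar δ ∧
        ‖x' k - x k‖ ≤ lam k ∧
        f xbar ≤ f (x' k) ∧ f (x' k) ≤ f (x k) ∧
        (x' k ∈ Metric.ball xbar δ → ‖gradient f (x' k)‖ ≤ ε k / lam k) :=
  stmt_16_general f U xbar δ hball hf hmin x ε hx hfx
end

section
/- Let f : ℝⁿ → ℝ be C^1 on a neighbourhood of x̄ with x̄ a local minimum of f, let Σ be the set of critical points of f near x̄, and suppose there exist positive constants c, δ, w̄ with ‖∇f(x)‖ ≥ c·dist(x, Σ)^{r−1} for all x in {x : |f(x)−f(x̄)| ≤ w̄·dist(x,Σ)^r} ∩ B_δ(x̄), where r ≥ 2. Assume moreover that ∇f is L-Lipschitz near x̄ for some L > 0. Then for every ε with 0 < ε < 2^{−r}L^{−r}·min{c, w̄}, and every function h : ℝⁿ → ℝ satisfying |h(x) − h(x̄)| ≤ ε·‖∇f(x)‖^r for x near x̄, the point x̄ is a local minimum of f + h. -/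
open Filter Metric Set Topology

/-!
Since `∇f` is Lipschitz and vanishes on `S`, `‖∇f x‖ ≤ L · dist(x, S)`, so the perturbation is
bounded by `κ · dist(x, S)^r` with `κ = ε Lʳ < min{c, w} / 2ʳ`. It then suffices to show the growth
bound `f x - f x̄ ≥ κ · dist(x, S)^r` near `x̄`. If it failed at `x₀`, with `d = dist(x₀, S)`,
minimise `f + σ · dist(·, x₀)` with `σ = 2κ d^(r-1)` over a compact ball (a finite-dimensional
substitute for Ekeland's principle). The minimiser `y` satisfies `dist(y, x₀) < d / 2`, so
`dist(y, S) ≥ d / 2`; it lies in the horn, and `‖∇f y‖ ≤ σ`, contradicting the Łojasiewicz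
inequality at `y`.
-/

theorem eventually_norm_le_mul_infDist {X E : Type*} [PseudoMetricSpace X]
    [SeminormedAddCommGroup E] {g : X → E} {K : NNReal} {s S : Set X} {a : X}
    (hs : s ∈ 𝓝 a) (hg : LipschitzOnWith K g s) (hS : ∀ y ∈ S, g y = 0) (ha : a ∈ S) :
    ∀ᶠ x in 𝓝 a, ‖g x‖ ≤ K * infDist x S := by
  obtain ⟨ρ, hρ, hρs⟩ := nhds_basis_closedBall.mem_iff.1 hs
  filter_upwards [closedBall_mem_nhds a (half_pos hρ)] with x hx
  have hxs : x ∈ s := hρs (closedBall_subset_closedBall (by linarith) hx)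
  have hbound : ∀ y ∈ S, ‖g x‖ ≤ K * dist x y := by
    intro y hy
    -- Compare with `a` when `y` is far away, so that only points of `s` are used.
    rcases le_or_gt (dist x a) (dist x y) with hle | hlt
    · have hxa := hg.dist_le_mul x hxs a (hρs (mem_closedBall_self hρ.le))
      rw [hS a ha, dist_zero_right] at hxa
      exact hxa.trans (by gcongr)
    · have hys : y ∈ s := hρs <| mem_closedBall.2 <| by
        linarith [dist_triangle y x a, dist_comm x y, mem_closedBall.1 hx]
      simpa [hS y hy] using hg.dist_le_mul x hxs y hys
  have : Nonempty S := ⟨⟨a, ha⟩⟩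
  rw [infDist_eq_iInf, Real.mul_iInf_of_nonneg K.coe_nonneg]
  exact le_ciInf fun y => hbound y y.2

theorem exists_isLocalMin_add_mul_dist {X : Type*} [PseudoMetricSpace X] [ProperSpace X]
    {f : X → ℝ} {a x₀ : X} {R σ m : ℝ} (hf : ContinuousOn f (closedBall a R))
    (hm : ∀ z ∈ closedBall a R, m ≤ f z) (hσ : 0 < σ) (hx₀ : x₀ ∈ closedBall a R)
    (hR : dist x₀ a + (f x₀ - m) / σ < R) :
    ∃ y ∈ ball a R, f y + σ * dist y x₀ ≤ f x₀ ∧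
      IsLocalMin (fun z => f z + σ * dist z x₀) y := by
  have hcont : ContinuousOn (fun z => f z + σ * dist z x₀) (closedBall a R) :=
    hf.add (by fun_prop)
  obtain ⟨y, hyR, hymin⟩ := (isCompact_closedBall a R).exists_isMinOn ⟨x₀, hx₀⟩ hcont
  have hy : f y + σ * dist y x₀ ≤ f x₀ := by simpa using hymin hx₀
  have hyx₀ : dist y x₀ ≤ (f x₀ - m) / σ := by
    rw [le_div_iff₀ hσ]
    linarith [hm y hyR]
  have hy_ball : y ∈ ball a R := mem_ball.2 (by linarith [dist_triangle y x₀ a])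
  exact ⟨y, hy_ball, hy, hymin.isLocalMin (closedBall_mem_nhds_of_mem hy_ball)⟩

theorem norm_le_of_isLocalMin_add_mul_dist {E : Type*} [NormedAddCommGroup E]
    [NormedSpace ℝ E] {f : E → ℝ} {f' : E →L[ℝ] ℝ} {x₀ y : E} {σ : ℝ} (hσ : 0 ≤ σ)
    (hmin : IsLocalMin (fun z => f z + σ * dist z x₀) y) (hf : HasFDerivAt f f' y) :
    ‖f'‖ ≤ σ := by
  have hlower : ∀ v, -(σ * ‖v‖) ≤ f' v := by
    intro v
    have hline : Tendsto (fun c : ℝ => y + c⁻¹ • v) atTop (𝓝 y) := by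
      simpa using ((tendsto_inv_atTop_zero (𝕜 := ℝ)).smul_const v).const_add y
    refine ge_of_tendsto (hf.lim_real v) ?_
    filter_upwards [hline.eventually hmin, eventually_gt_atTop 0] with c hc hc0
    have hdist : dist (y + c⁻¹ • v) x₀ ≤ c⁻¹ * ‖v‖ + dist y x₀ := by
      have := dist_triangle (y + c⁻¹ • v) y x₀
      rwa [dist_self_add_left, norm_smul, Real.norm_of_nonneg (inv_nonneg.2 hc0.le)] at this
    have hstep : -(σ * (c⁻¹ * ‖v‖)) ≤ f (y + c⁻¹ • v) - f y := by
      nlinarith [mul_le_mul_of_nonneg_left hdist hσ]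
    calc -(σ * ‖v‖) = c * -(σ * (c⁻¹ * ‖v‖)) := by field_simp
      _ ≤ c • (f (y + c⁻¹ • v) - f y) := mul_le_mul_of_nonneg_left hstep hc0.le
  refine ContinuousLinearMap.opNorm_le_bound f' hσ fun v => abs_le.2 ⟨hlower v, ?_⟩
  simpa using hlower (-v)

theorem two_mul_mul_pow_sub_one_lt {r : ℕ} (hr : r ≠ 0) {κ c d e : ℝ} (hd : 0 ≤ d)
    (hde : d ≤ 2 * e) (he : 0 < e) (hκ : 0 ≤ κ) (hκc : 2 ^ r * κ < c) :
    2 * κ * d ^ (r - 1) < c * e ^ (r - 1) :=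
  calc 2 * κ * d ^ (r - 1) ≤ 2 * κ * (2 * e) ^ (r - 1) := by gcongr
    _ = 2 ^ r * κ * e ^ (r - 1) := by
      rw [mul_pow, ← mul_pow_sub_one hr (2 : ℝ)]
      ring
    _ < c * e ^ (r - 1) := by gcongr

theorem eventually_mul_infDist_pow_le_sub {E : Type*} [NormedAddCommGroup E]
    [InnerProductSpace ℝ E] [ProperSpace E] {f : E → ℝ} {a : E} {S : Set E} {r : ℕ}
    {c w κ : ℝ} (hr : 1 ≤ r) (hdiff : ∀ᶠ x in 𝓝 a, DifferentiableAt ℝ f x)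
    (hmin : IsLocalMin f a) (ha : a ∈ S)
    (hloj : ∀ᶠ x in 𝓝 a, |f x - f a| ≤ w * infDist x S ^ r →
      c * infDist x S ^ (r - 1) ≤ ‖gradient f x‖)
    (hκ : 0 < κ) (hκc : 2 ^ r * κ < c) (hκw : 2 ^ r * κ < w) :
    ∀ᶠ x in 𝓝 a, κ * infDist x S ^ r ≤ f x - f a := by
  obtain ⟨ρ, hρ, hball⟩ := nhds_basis_closedBall.mem_iff.1 (hdiff.and (hmin.and hloj))
  filter_upwards [closedBall_mem_nhds a (half_pos hρ)] with x₀ hx₀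
  have hx₀ρ : x₀ ∈ closedBall a ρ := closedBall_subset_closedBall (by linarith) hx₀
  set d := infDist x₀ S
  by_contra! hlt
  have hd : 0 < d := by
    by_contra! hd0
    rw [le_antisymm hd0 infDist_nonneg, zero_pow (by omega), mul_zero, sub_neg] at hlt
    exact (hball hx₀ρ).2.1.not_gt hlt
  have hdρ : d ≤ ρ / 2 := (infDist_le_dist_of_mem ha).trans hx₀
  set σ := 2 * κ * d ^ (r - 1)
  have hσ : 0 < σ := by positivity
  have hσd : σ * (d / 2) = κ * d ^ r := by
    rw [← pow_sub_one_mul (by omega : r ≠ 0) d]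
    ring
  have hslack : (f x₀ - f a) / σ < d / 2 := by rw [div_lt_iff₀ hσ]; linarith
  obtain ⟨y, hyρ, hy, hymin⟩ := exists_isLocalMin_add_mul_dist (m := f a)
    (fun z hz => (hball hz).1.continuousAt.continuousWithinAt) (fun z hz => (hball hz).2.1)
    hσ hx₀ρ (by linarith [mem_closedBall.1 hx₀])
  obtain ⟨hdiffy, hfy, hlojy⟩ := hball (ball_subset_closedBall hyρ)
  have hyx₀ : dist y x₀ < d / 2 := lt_of_mul_lt_mul_left (by linarith) hσ.le
  set e := infDist y S
  have hde : d ≤ 2 * e := by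
    linarith [infDist_le_infDist_add_dist (x := x₀) (y := y) (s := S), dist_comm x₀ y]
  have he : 0 < e := by linarith
  have hgrad : ‖gradient f y‖ ≤ σ := by
    rw [gradient, LinearIsometryEquiv.norm_map]
    exact norm_le_of_isLocalMin_add_mul_dist hσ.le hymin hdiffy.hasFDerivAt
  have hhorn : |f y - f a| ≤ w * e ^ r :=
    calc |f y - f a| = f y - f a := abs_of_nonneg (sub_nonneg.2 hfy)
      _ ≤ κ * d ^ r := by nlinarith [dist_nonneg (x := y) (y := x₀)]
      _ ≤ κ * (2 * e) ^ r := by gcongr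
      _ = 2 ^ r * κ * e ^ r := by ring
      _ ≤ w * e ^ r := by gcongr
  exact ((hlojy hhorn).trans hgrad).not_gt
    (two_mul_mul_pow_sub_one_lt (by omega) hd.le hde he hκ.le hκc)

theorem stmt_18_general {n : ℕ} (r : ℕ) (hr : 2 ≤ r) (f : EuclideanSpace ℝ (Fin n) → ℝ)
    (xbar : EuclideanSpace ℝ (Fin n)) (V S : Set (EuclideanSpace ℝ (Fin n)))
    (hV : IsOpen V) (hx : xbar ∈ V) (hf : ContDiffOn ℝ 1 f V)
    (hmin : IsLocalMin f xbar)
    (hS : S = {x ∈ V | gradient f x = 0})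
    (c δ w : ℝ) (hδ : 0 < δ)
    (hgrad : ∀ x ∈ Metric.closedBall xbar δ,
      |f x - f xbar| ≤ w * Metric.infDist x S ^ r →
      c * Metric.infDist x S ^ (r - 1) ≤ ‖gradient f x‖)
    (L : ℝ) (hL : 0 < L)
    (hLip : ∃ s ∈ 𝓝 xbar, LipschitzOnWith (Real.toNNReal L) (gradient f) s) :
    ∀ ε : ℝ, 0 < ε → ε < min c w / (2 ^ r * L ^ r) →
      ∀ h : EuclideanSpace ℝ (Fin n) → ℝ,
        (∀ᶠ x in 𝓝 xbar, |h x - h xbar| ≤ ε * ‖gradient f x‖ ^ r) →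
        IsLocalMin (f + h) xbar := by
  intro ε hε hεlt h hh
  obtain ⟨s, hs, hLip⟩ := hLip
  have hcrit : ∀ y ∈ S, gradient f y = 0 := by rw [hS]; exact fun y hy => hy.2
  have hxS : xbar ∈ S := by
    rw [hS]
    exact ⟨hx, by rw [gradient, hmin.fderiv_eq_zero, map_zero]⟩
  have hdiff : ∀ᶠ x in 𝓝 xbar, DifferentiableAt ℝ f x := (hV.eventually_mem hx).mono
    fun x hxV => (hf.differentiableOn one_ne_zero).differentiableAt (hV.mem_nhds hxV)
  have hκ : 2 ^ r * (ε * L ^ r) < min c w := by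
    rw [lt_div_iff₀ (by positivity)] at hεlt
    linarith
  have hgrowth := eventually_mul_infDist_pow_le_sub (by omega) hdiff hmin hxS
    (eventually_of_mem (closedBall_mem_nhds xbar hδ) hgrad) (by positivity)
    (hκ.trans_le (min_le_left c w)) (hκ.trans_le (min_le_right c w))
  filter_upwards [hgrowth, hh, eventually_norm_le_mul_infDist hs hLip hcrit hxS]
    with x hfx hhx hgx
  rw [Real.coe_toNNReal L hL.le] at hgx
  have hpert : ε * ‖gradient f x‖ ^ r ≤ ε * L ^ r * infDist x S ^ r := by
    rw [mul_assoc, ← mul_pow]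
    gcongr
  simp only [Pi.add_apply]
  linarith [neg_abs_le (h x - h xbar)]

/-- Stability under perturbations measured by the gradient: if the Łojasiewicz inequality
holds on a horn-neighbourhood relative to the critical set `S` of `f`, `∇f` is `L`-Lipschitz
near `xbar`, and `|h(x) - h(xbar)| ≤ ε·‖∇f(x)‖^r` near `xbar` with
`ε < min{c, w}/(2^r L^r)`, then `xbar` is a local minimum of `f + h`. -/
theorem stmt_18 {n : ℕ} (r : ℕ) (hr : 2 ≤ r) (f : EuclideanSpace ℝ (Fin n) → ℝ)
    (xbar : EuclideanSpace ℝ (Fin n)) (V S : Set (EuclideanSpace ℝ (Fin n)))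
    (hV : IsOpen V) (hx : xbar ∈ V) (hf : ContDiffOn ℝ 1 f V)
    (hmin : IsLocalMin f xbar)
    (hS : S = {x ∈ V | gradient f x = 0})
    (c δ w : ℝ) (hc : 0 < c) (hδ : 0 < δ) (hw : 0 < w)
    (hgrad : ∀ x ∈ Metric.closedBall xbar δ,
      |f x - f xbar| ≤ w * Metric.infDist x S ^ r →
      c * Metric.infDist x S ^ (r - 1) ≤ ‖gradient f x‖)
    (L : ℝ) (hL : 0 < L)
    (hLip : ∃ s ∈ 𝓝 xbar, LipschitzOnWith (Real.toNNReal L) (gradient f) s) :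
    ∀ ε : ℝ, 0 < ε → ε < min c w / (2 ^ r * L ^ r) →
      ∀ h : EuclideanSpace ℝ (Fin n) → ℝ,
        (∀ᶠ x in 𝓝 xbar, |h x - h xbar| ≤ ε * ‖gradient f x‖ ^ r) →
        IsLocalMin (f + h) xbar :=
  stmt_18_general r hr f xbar V S hV hx hf hmin hS c δ w hδ hgrad L hL hLip
end
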